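/- Let ρ be a positive real-valued function of class C² on an interval (1−ε, 1] for some ε > 0, and let f be a real function of class C² on an interval (−δ, δ) for some δ > 0 with f(0) = ρ(1). If f(sin φ · ρ(cos φ)) = cos φ · ρ(cos φ) for all sufficiently small φ > 0, then f''(0) = −(ρ(1) + ρ'(1)) / ρ(1)². -/

import Mathlib

open Set Filter Topology

/-- If `ρ` is a positive `C²` radial profile on `(1−ε, 1]` and `f` is a `C²` function
on `(−δ, δ)` with `f(0) = ρ(1)` describing the boundary graph of the corresponding
body of revolution near the axis, i.e. `f(sin φ · ρ(cos φ)) = cos φ · ρ(cos φ)` for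
all sufficiently small `φ > 0`, then `f''(0) = −(ρ(1) + ρ'(1)) / ρ(1)²`. -/
theorem boundary_graph_second_deriv_at_axis
    (ρ : ℝ → ℝ) (ε : ℝ) (hε : 0 < ε)
    (hρ_pos : ∀ t ∈ Ioc (1 - ε) 1, 0 < ρ t)
    (hρ_C2 : ContDiffOn ℝ 2 ρ (Ioc (1 - ε) 1))
    (ρ'1 : ℝ) (hρ'1 : HasDerivWithinAt ρ ρ'1 (Iic 1) 1)
    (f : ℝ → ℝ) (δ : ℝ) (hδ : 0 < δ)
    (hf_C2 : ContDiffOn ℝ 2 f (Ioo (-δ) δ))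
    (hf0 : f 0 = ρ 1)
    (hgraph : ∃ φ₀ > (0 : ℝ), ∀ φ : ℝ, 0 < φ → φ < φ₀ →
      f (Real.sin φ * ρ (Real.cos φ)) = Real.cos φ * ρ (Real.cos φ)) :
    deriv (deriv f) 0 = -(ρ 1 + ρ'1) / ρ 1 ^ 2 := by
  obtain ⟨φ₀, hφ₀, hgr⟩ := hgraph
  have hρ1 : 0 < ρ 1 := hρ_pos 1 ⟨by linarith, le_refl 1⟩
  set x : ℝ → ℝ := fun φ => Real.sin φ * ρ (Real.cos φ) with hxdef
  set y : ℝ → ℝ := fun φ => Real.cos φ * ρ (Real.cos φ) with hydef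
  -- derivative of ρ ∘ cos at 0 within Ici 0
  have hρ'1c : HasDerivWithinAt ρ ρ'1 (Iic 1) (Real.cos 0) := by
    rw [Real.cos_zero]; exact hρ'1
  have hρcos : HasDerivWithinAt (fun φ => ρ (Real.cos φ)) 0 (Ici 0) 0 := by
    have := hρ'1c.comp (0 : ℝ) ((Real.hasDerivAt_cos 0).hasDerivWithinAt (s := Ici 0))
      (fun t _ => Real.cos_le_one t)
    simpa [Function.comp_def] using this
  have hx' : HasDerivWithinAt x (ρ 1) (Ioi 0) 0 := by
    have h := ((Real.hasDerivAt_sin 0).hasDerivWithinAt (s := Ici 0)).mul hρcos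
    simp only [Real.cos_zero, Real.sin_zero, one_mul, mul_zero, add_zero, zero_mul] at h
    exact h.mono Ioi_subset_Ici_self
  have hy' : HasDerivWithinAt y 0 (Ioi 0) 0 := by
    have h := ((Real.hasDerivAt_cos 0).hasDerivWithinAt (s := Ici 0)).mul hρcos
    simp only [Real.cos_zero, Real.sin_zero, neg_zero, zero_mul, mul_zero, add_zero] at h
    exact h.mono Ioi_subset_Ici_self
  have hx0 : x 0 = 0 := by simp [hxdef]
  have hy0 : y 0 = ρ 1 := by simp [hydef]
  -- basic eventual facts on 𝓝[>] 0
  have hev : ∀ᶠ φ in 𝓝[>] (0:ℝ), 0 < φ ∧ φ < Real.pi ∧ φ < φ₀ ∧ 1 - ε < Real.cos φ ∧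
      0 < Real.cos φ := by
    have h1 : ∀ᶠ φ in 𝓝[>] (0:ℝ), 0 < φ := self_mem_nhdsWithin
    have h2 : ∀ᶠ φ in 𝓝[>] (0:ℝ), φ < Real.pi :=
      nhdsWithin_le_nhds (Iio_mem_nhds Real.pi_pos)
    have h3 : ∀ᶠ φ in 𝓝[>] (0:ℝ), φ < φ₀ := nhdsWithin_le_nhds (Iio_mem_nhds hφ₀)
    have hcos1 : Tendsto Real.cos (𝓝[>] (0:ℝ)) (𝓝 1) := by
      have := (Real.continuous_cos.tendsto 0).mono_left (nhdsWithin_le_nhds (s := Ioi 0))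
      simpa using this
    have h4 : ∀ᶠ φ in 𝓝[>] (0:ℝ), 1 - ε < Real.cos φ :=
      hcos1 (Ioi_mem_nhds (by linarith))
    have h5 : ∀ᶠ φ in 𝓝[>] (0:ℝ), 0 < Real.cos φ :=
      hcos1 (Ioi_mem_nhds one_pos)
    filter_upwards [h1, h2, h3, h4, h5] with φ a b c d e using ⟨a, b, c, d, e⟩
  have hxpos : ∀ᶠ φ in 𝓝[>] (0:ℝ), 0 < x φ := by
    filter_upwards [hev] with φ ⟨h1, h2, _, h4, _⟩
    exact mul_pos (Real.sin_pos_of_pos_of_lt_pi h1 h2)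
      (hρ_pos _ ⟨h4, Real.cos_le_one φ⟩)
  have hx_t : Tendsto x (𝓝[>] (0:ℝ)) (𝓝[>] (0:ℝ)) := by
    rw [tendsto_nhdsWithin_iff]
    refine ⟨?_, hxpos⟩
    have := hx'.continuousWithinAt
    rw [ContinuousWithinAt, hx0] at this
    exact this
  -- slope limits for the curve at 0
  have hxs : Tendsto (slope x 0) (𝓝[>] (0:ℝ)) (𝓝 (ρ 1)) :=
    (hasDerivWithinAt_iff_tendsto_slope' (notMem_Ioi.mpr le_rfl)).1 hx'
  have hys : Tendsto (slope y 0) (𝓝[>] (0:ℝ)) (𝓝 0) :=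
    (hasDerivWithinAt_iff_tendsto_slope' (notMem_Ioi.mpr le_rfl)).1 hy'
  have hquot1 : Tendsto (fun φ => (y φ - ρ 1) / x φ) (𝓝[>] (0:ℝ)) (𝓝 0) := by
    have h := hys.div hxs (ne_of_gt hρ1)
    rw [zero_div] at h
    refine h.congr' ?_
    filter_upwards [self_mem_nhdsWithin] with φ (hφ : 0 < φ)
    rw [Pi.div_apply, slope_def_field, slope_def_field, hx0, hy0, sub_zero, sub_zero,
      div_div_div_cancel_right₀ (ne_of_gt hφ)]
  -- f is differentiable near 0
  have h0mem : (0:ℝ) ∈ Ioo (-δ) δ := ⟨by linarith, hδ⟩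
  have hIoo : Ioo (-δ) δ ∈ 𝓝 (0:ℝ) := isOpen_Ioo.mem_nhds h0mem
  have hf_diff : DifferentiableOn ℝ f (Ioo (-δ) δ) := hf_C2.differentiableOn two_ne_zero
  have hfd0 : HasDerivAt f (deriv f 0) 0 :=
    ((hf_diff 0 h0mem).differentiableAt hIoo).hasDerivAt
  have hIoi_le : 𝓝[>] (0:ℝ) ≤ 𝓝[≠] (0:ℝ) :=
    nhdsWithin_mono 0 (fun a ha => ne_of_gt ha)
  -- graph substitution
  have hsubst : ∀ᶠ φ in 𝓝[>] (0:ℝ), f (x φ) = y φ := by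
    filter_upwards [hev] with φ ⟨h1, _, h3, _, _⟩ using hgr φ h1 h3
  -- first derivative is 0
  have hf'0 : deriv f 0 = 0 := by
    have h1 : Tendsto (slope f 0) (𝓝[≠] (0:ℝ)) (𝓝 (deriv f 0)) :=
      hasDerivAt_iff_tendsto_slope.1 hfd0
    have h2 : Tendsto (fun φ => slope f 0 (x φ)) (𝓝[>] (0:ℝ)) (𝓝 (deriv f 0)) :=
      h1.comp (hx_t.mono_right hIoi_le)
    have h3 : Tendsto (fun φ => (y φ - ρ 1) / x φ) (𝓝[>] (0:ℝ)) (𝓝 (deriv f 0)) := by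
      refine h2.congr' ?_
      filter_upwards [hsubst] with φ hφ
      rw [slope_def_field, hφ, hf0, sub_zero]
    exact (tendsto_nhds_unique h3 hquot1)
  -- second derivative of f at 0
  have hdf_C1 : ContDiffOn ℝ 1 (deriv f) (Ioo (-δ) δ) :=
    hf_C2.deriv_of_isOpen isOpen_Ioo (by norm_num)
  have hdf0 : HasDerivAt (deriv f) (deriv (deriv f) 0) 0 :=
    (((hdf_C1.differentiableOn one_ne_zero) 0 h0mem).differentiableAt hIoo).hasDerivAt
  -- L'Hopital: (f t - f 0)/t² → f''(0)/2 as t → 0⁺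
  have hLH : Tendsto (fun t => (f t - f 0) / t ^ 2) (𝓝[>] (0:ℝ))
      (𝓝 (deriv (deriv f) 0 / 2)) := by
    have hIooev : ∀ᶠ t in 𝓝[>] (0:ℝ), t ∈ Ioo (-δ) δ := nhdsWithin_le_nhds hIoo
    refine HasDerivAt.lhopital_zero_nhdsGT
      (f' := fun t => deriv f t) (g' := fun t => 2 * t) ?_ ?_ ?_ ?_ ?_ ?_
    · filter_upwards [hIooev] with t ht
      exact (((hf_diff t ht).differentiableAt
        (isOpen_Ioo.mem_nhds ht)).hasDerivAt).sub_const (f 0)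
    · filter_upwards with t
      simpa using hasDerivAt_pow 2 t
    · filter_upwards [self_mem_nhdsWithin] with t (ht : 0 < t)
      positivity
    · have : Tendsto f (𝓝[>] (0:ℝ)) (𝓝 (f 0)) :=
        (hfd0.continuousAt.tendsto).mono_left nhdsWithin_le_nhds
      simpa using this.sub_const (f 0)
    · have : Tendsto (fun t : ℝ => t ^ 2) (𝓝 (0:ℝ)) (𝓝 (0 ^ 2)) :=
        (continuous_pow 2).tendsto 0
      simpa using this.mono_left nhdsWithin_le_nhds
    · have h1 : Tendsto (slope (deriv f) 0) (𝓝[≠] (0:ℝ)) (𝓝 (deriv (deriv f) 0)) :=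
        hasDerivAt_iff_tendsto_slope.1 hdf0
      have h2 := (h1.mono_left hIoi_le).div_const 2
      refine h2.congr' ?_
      filter_upwards [self_mem_nhdsWithin] with t (ht : 0 < t)
      rw [slope_def_field, hf'0, sub_zero, sub_zero, div_div, mul_comm]
  have hcomp : Tendsto (fun φ => (f (x φ) - f 0) / (x φ) ^ 2) (𝓝[>] (0:ℝ))
      (𝓝 (deriv (deriv f) 0 / 2)) := hLH.comp hx_t
  -- direct computation of the curve limit
  have hρcont : Tendsto ρ (𝓝[<] (1:ℝ)) (𝓝 (ρ 1)) :=
    (hρ'1.continuousWithinAt.mono Iio_subset_Iic_self)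
  have hhd : HasDerivWithinAt (fun t => t * ρ t) (ρ 1 + ρ'1) (Iic 1) 1 := by
    have := (hasDerivWithinAt_id (1:ℝ) (Iic 1)).mul hρ'1
    simpa [Pi.mul_def] using this
  have hB : Tendsto (slope (fun t => t * ρ t) 1) (𝓝[<] (1:ℝ)) (𝓝 (ρ 1 + ρ'1)) := by
    have := hasDerivWithinAt_iff_tendsto_slope.1 hhd
    rwa [Iic_diff_right] at this
  have hC : Tendsto (fun t => -1 / ((1 + t) * ρ t ^ 2)) (𝓝[<] (1:ℝ))
      (𝓝 (-1 / ((1 + 1) * ρ 1 ^ 2))) := by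
    have hid : Tendsto (fun t : ℝ => t) (𝓝[<] (1:ℝ)) (𝓝 1) :=
      (continuous_id.tendsto 1).mono_left nhdsWithin_le_nhds
    exact tendsto_const_nhds.div
      ((tendsto_const_nhds.add hid).mul (hρcont.pow 2))
      (by positivity)
  have hBC := hB.mul hC
  have hcos_t : Tendsto Real.cos (𝓝[>] (0:ℝ)) (𝓝[<] (1:ℝ)) := by
    rw [tendsto_nhdsWithin_iff]
    constructor
    · have := (Real.continuous_cos.tendsto 0).mono_left (nhdsWithin_le_nhds (s := Ioi 0))
      simpa using this
    · filter_upwards [hev] with φ ⟨h1, h2, _, _, _⟩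
      have := Real.cos_lt_cos_of_nonneg_of_le_pi le_rfl h2.le h1
      simpa using this
  have hQ : Tendsto (fun φ => slope (fun t => t * ρ t) 1 (Real.cos φ) *
      (-1 / ((1 + Real.cos φ) * ρ (Real.cos φ) ^ 2))) (𝓝[>] (0:ℝ))
      (𝓝 ((ρ 1 + ρ'1) * (-1 / ((1 + 1) * ρ 1 ^ 2)))) := hBC.comp hcos_t
  -- the two expressions agree eventually
  have hkey : Tendsto (fun φ => (f (x φ) - f 0) / (x φ) ^ 2) (𝓝[>] (0:ℝ))
      (𝓝 ((ρ 1 + ρ'1) * (-1 / ((1 + 1) * ρ 1 ^ 2)))) := by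
    refine hQ.congr' ?_
    filter_upwards [hev, hsubst] with φ ⟨h1, h2, h3, h4, h5⟩ hsub
    set t := Real.cos φ with htdef
    have ht1 : t < 1 := by
      have := Real.cos_lt_cos_of_nonneg_of_le_pi le_rfl h2.le h1
      simpa using this
    have hρt : 0 < ρ t := hρ_pos t ⟨h4, ht1.le⟩
    have hsin2 : Real.sin φ ^ 2 = 1 - t ^ 2 := Real.sin_sq φ
    have hne1 : t - 1 ≠ 0 := sub_ne_zero.mpr (ne_of_lt ht1)
    have hne2 : (1:ℝ) + t ≠ 0 := by positivity
    have hne3 : ρ t ≠ 0 := ne_of_gt hρt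
    rw [slope_def_field, hsub, hf0]
    show (t * ρ t - 1 * ρ 1) / (t - 1) * (-1 / ((1 + t) * ρ t ^ 2))
        = (Real.cos φ * ρ t - ρ 1) / (Real.sin φ * ρ t) ^ 2
    rw [mul_pow, hsin2, one_mul, div_mul_div_comm, mul_neg_one,
      show (t - 1) * ((1 + t) * ρ t ^ 2) = -((1 - t ^ 2) * ρ t ^ 2) by ring,
      neg_div_neg_eq]
  have hfinal := tendsto_nhds_unique hcomp hkey
  have hρ1' : ρ 1 ≠ 0 := ne_of_gt hρ1
  field_simp at hfinal ⊢
  linarith
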